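/- For all integers n ≥ 1 and 0 ≤ m with 2m ≤ n, the space of highest weight vectors of weight n − 2m in V^⊗n, namely {v ∈ V^⊗n : H·v = (n − 2m)·v and E·v = 0}, has complex dimension binom(n,m) − binom(n,m−1) (with binom(n,−1) := 0). Equivalently, the simple sl₂(ℂ)-module of highest weight n − 2m occurs in V^⊗n with multiplicity binom(n,m) − binom(n,m−1). -/

import Mathlib

open scoped TensorProduct

noncomputable section

/-- V = ℂ². -/
abbrev V2 : Type := Fin 2 → ℂ

/-- The basis vectors e₁ = `bvec 0`, e₂ = `bvec 1` of V = ℂ². -/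
def bvec (j : Fin 2) : V2 := Pi.single j 1

/-- The matrix of H : H·e₁ = −e₁, H·e₂ = e₂. -/
def Hmat : Matrix (Fin 2) (Fin 2) ℂ := !![-1, 0; 0, 1]

/-- The matrix of E : E·e₁ = e₂, E·e₂ = 0. -/
def Emat : Matrix (Fin 2) (Fin 2) ℂ := !![0, 0; 1, 0]

/-- The matrix of F : F·e₂ = e₁, F·e₁ = 0. -/
def Fmat : Matrix (Fin 2) (Fin 2) ℂ := !![0, 1; 0, 0]

/-- The action of a matrix `g` on the `n`-fold tensor power of V = ℂ² by derivations:
`g·(v₁⊗⋯⊗vₙ) = Σᵢ v₁⊗⋯⊗(g·vᵢ)⊗⋯⊗vₙ`. -/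
def derivAction (n : ℕ) (g : Matrix (Fin 2) (Fin 2) ℂ) :
    (⨂[ℂ] _ : Fin n, V2) →ₗ[ℂ] ⨂[ℂ] _ : Fin n, V2 :=
  ∑ i : Fin n, PiTensorProduct.map
    (Function.update (fun _ : Fin n => (LinearMap.id : V2 →ₗ[ℂ] V2)) i g.mulVecLin)

/-!
Index the tensor basis of `V^⊗n` by subsets `s ⊆ {1, …, n}`, the positions carrying `e₁`. In these
coordinates `H` is diagonal with eigenvalue `n - 2|s|`, so the weight-`(n - 2m)` space consists of
the functions supported on `m`-subsets, and `E` becomes the raising operator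
`(E x)(s) = ∑_{i ∉ s} x(s ∪ {i})`. Its adjoint for the standard Hermitian form is the lowering
operator `F`, and `[E, F] = H`. For `x` supported on `l`-subsets this gives
`‖F x‖² = ‖E x‖² + (n - 2l) ‖x‖²`, so `E F` is injective on that level when `2l < n`. Hence `E` maps
the `(l+1)`-level onto the `l`-level, and rank–nullity gives the dimension
`C(n, l+1) - C(n, l)` of its kernel there.
-/

open Finset Matrix

lemma ker_eq_comap_of_comp_eq {R M N : Type*} [Semiring R] [AddCommMonoid M] [Module R M]
    [AddCommMonoid N] [Module R N] (e : M ≃ₗ[R] N) {A : M →ₗ[R] M} {B : N →ₗ[R] N}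
    (h : e.toLinearMap ∘ₗ A = B ∘ₗ e) :
    LinearMap.ker A = (LinearMap.ker B).comap e.toLinearMap := by
  rw [← e.ker_comp A, h, LinearMap.ker_comp]

open scoped ComplexOrder in
theorem eq_zero_of_comp_adjoint_eq_zero {ι : Type*} [Fintype ι] {E F : (ι → ℂ) → ι → ℂ}
    (hadj : ∀ x y, star (F x) ⬝ᵥ y = star x ⬝ᵥ E y) {c : ℝ} (hc : 0 < c) {x : ι → ℂ}
    (hcomm : E (F x) - F (E x) = (c : ℂ) • x) (hx : E (F x) = 0) : x = 0 := by
  have hadj' : star (E x) ⬝ᵥ E x = star x ⬝ᵥ F (E x) := by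
    rw [star_dotProduct, ← hadj, ← star_dotProduct]
  have hsum : star (E x) ⬝ᵥ E x + (c : ℂ) * (star x ⬝ᵥ x) = 0 := by
    rw [hadj', ← smul_eq_mul, ← dotProduct_smul, ← dotProduct_add, ← hcomm, hx, zero_sub,
      add_neg_cancel, dotProduct_zero]
  have hc' : (0 : ℂ) ≤ c := Complex.zero_le_real.mpr hc.le
  have := ((add_eq_zero_iff_of_nonneg (dotProduct_star_self_nonneg _)
    (mul_nonneg hc' (dotProduct_star_self_nonneg x))).mp hsum).2
  rw [mul_eq_zero, Complex.ofReal_eq_zero] at this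
  exact dotProduct_star_self_eq_zero.mp (this.resolve_left hc.ne')

namespace SubsetSl2

def level (α : Type*) (k : ℕ) : Submodule ℂ (Finset α → ℂ) := Submodule.pi {s | #s ≠ k} fun _ => ⊥

variable {α : Type*}

lemma mem_level {k : ℕ} {x : Finset α → ℂ} : x ∈ level α k ↔ ∀ s, #s ≠ k → x s = 0 := by
  simp [level]

section

variable [Fintype α]

def levelEquiv (k : ℕ) : level α k ≃ₗ[ℂ] ({s : Finset α // #s = k} → ℂ) where
  toFun x s := x.1 s
  map_add' _ _ := rfl
  map_smul' _ _ := rfl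
  invFun y := ⟨fun s => if h : #s = k then y ⟨s, h⟩ else 0, mem_level.2 fun _ hs => dif_neg hs⟩
  left_inv x := Subtype.ext <| funext fun s => by
    by_cases h : #s = k
    · simp [h]
    · simp [h, mem_level.1 x.2 s h]
  right_inv y := funext fun s => dif_pos s.2

lemma finrank_level (k : ℕ) : Module.finrank ℂ (level α k) = (Fintype.card α).choose k := by
  rw [(levelEquiv k).finrank_eq, Module.finrank_fintype_fun_eq_card, Fintype.card_finset_len]

@[simps]
def weightOp : (Finset α → ℂ) →ₗ[ℂ] Finset α → ℂ where
  toFun x s := ((Fintype.card α : ℂ) - 2 * #s) * x s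
  map_add' x y := by ext s; simp [mul_add]
  map_smul' c x := by ext s; simp [mul_left_comm]

lemma ker_weightOp_sub (m : ℕ) :
    LinearMap.ker (weightOp - ((Fintype.card α : ℂ) - 2 * m) • LinearMap.id) = level α m := by
  ext x
  simp only [LinearMap.mem_ker, LinearMap.sub_apply, LinearMap.smul_apply, LinearMap.id_apply,
    mem_level, funext_iff, Pi.sub_apply, Pi.smul_apply, Pi.zero_apply, smul_eq_mul, weightOp_apply]
  refine forall_congr' fun s => ?_
  have hweight : ((Fintype.card α : ℂ) - 2 * #s) - (Fintype.card α - 2 * m) = 0 ↔ #s = m := by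
    rw [sub_sub_sub_cancel_left, sub_eq_zero, mul_right_inj' two_ne_zero, Nat.cast_inj, eq_comm]
  rw [← sub_mul, mul_eq_zero, hweight]
  tauto

end

variable [DecidableEq α]

@[simps]
def lowerOp : (Finset α → ℂ) →ₗ[ℂ] Finset α → ℂ where
  toFun x s := ∑ i ∈ s, x (s.erase i)
  map_add' x y := by ext s; simp [sum_add_distrib]
  map_smul' c x := by ext s; simp [mul_sum]

lemma lowerOp_mem_level {k : ℕ} {x : Finset α → ℂ} (hx : x ∈ level α k) :
    lowerOp x ∈ level α (k + 1) := by
  refine mem_level.2 fun t ht => sum_eq_zero fun i hi => mem_level.1 hx _ ?_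
  have := card_pos.2 ⟨i, hi⟩
  rw [card_erase_of_mem hi]
  omega

variable [Fintype α]

@[simps]
def raiseOp : (Finset α → ℂ) →ₗ[ℂ] Finset α → ℂ where
  toFun x s := ∑ i ∈ sᶜ, x (insert i s)
  map_add' x y := by ext s; simp [sum_add_distrib]
  map_smul' c x := by ext s; simp [mul_sum]

lemma raiseOp_lowerOp_sub_lowerOp_raiseOp (x : Finset α → ℂ) :
    raiseOp (lowerOp x) - lowerOp (raiseOp x) = weightOp x := by
  ext s
  have hEF : raiseOp (lowerOp x) s
      = #sᶜ • x s + ∑ i ∈ sᶜ, ∑ j ∈ s, x (insert i (s.erase j)) := by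
    rw [← sum_const, ← sum_add_distrib]
    refine sum_congr rfl fun i hi => ?_
    rw [mem_compl] at hi
    rw [lowerOp_apply, sum_insert hi, erase_insert hi]
    exact congrArg _ (sum_congr rfl fun j hj => by
      rw [erase_insert_of_ne (ne_of_mem_of_not_mem hj hi).symm])
  have hFE : lowerOp (raiseOp x) s
      = #s • x s + ∑ j ∈ s, ∑ i ∈ sᶜ, x (insert i (s.erase j)) := by
    rw [← sum_const, ← sum_add_distrib]
    refine sum_congr rfl fun j hj => ?_
    rw [raiseOp_apply, compl_erase, sum_insert (by simpa using hj), insert_erase hj]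
  rw [Pi.sub_apply, hEF, hFE, sum_comm, weightOp_apply, card_compl, nsmul_eq_mul, nsmul_eq_mul,
    Nat.cast_sub (card_le_univ s)]
  ring

lemma star_lowerOp_dotProduct (x y : Finset α → ℂ) :
    star (lowerOp x) ⬝ᵥ y = star x ⬝ᵥ raiseOp y := by
  simp only [dotProduct, Pi.star_apply, lowerOp_apply, raiseOp_apply, star_sum, sum_mul, mul_sum]
  calc ∑ t, ∑ i ∈ t, star (x (t.erase i)) * y t
      = ∑ i, ∑ t with i ∈ t, star (x (t.erase i)) * y t := sum_comm' (by simp)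
    _ = ∑ i, ∑ s with i ∉ s, star (x s) * y (insert i s) := sum_congr rfl fun i _ =>
        sum_nbij' (·.erase i) (insert i) (by simp) (by simp)
          (fun _ h => insert_erase (by simpa using h)) (by simp)
          (fun _ h => by rw [insert_erase (by simpa using h)])
    _ = ∑ s, ∑ i ∈ sᶜ, star (x s) * y (insert i s) := (sum_comm' (by simp)).symm

lemma raiseOp_mem_level {k : ℕ} {x : Finset α → ℂ} (hx : x ∈ level α (k + 1)) :
    raiseOp x ∈ level α k := by
  refine mem_level.2 fun s hs => sum_eq_zero fun i hi => mem_level.1 hx _ ?_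
  rw [card_insert_of_notMem (mem_compl.1 hi)]
  omega

lemma level_zero_le_ker_raiseOp : level α 0 ≤ LinearMap.ker raiseOp :=
  fun x hx => LinearMap.mem_ker.2 <| funext fun s =>
    sum_eq_zero fun i hi => mem_level.1 hx _ (by rw [card_insert_of_notMem (mem_compl.1 hi)]; omega)

lemma eq_zero_of_raiseOp_lowerOp_eq_zero {l : ℕ} (hl : 2 * l < Fintype.card α)
    {x : Finset α → ℂ} (hx : x ∈ level α l) (h : raiseOp (lowerOp x) = 0) : x = 0 := by
  rw [← ker_weightOp_sub, LinearMap.mem_ker, LinearMap.sub_apply, sub_eq_zero] at hx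
  refine eq_zero_of_comp_adjoint_eq_zero star_lowerOp_dotProduct (c := Fintype.card α - 2 * l)
    (by rw [sub_pos]; exact_mod_cast hl) ?_ h
  rw [raiseOp_lowerOp_sub_lowerOp_raiseOp, hx]
  push_cast
  rfl

lemma exists_raiseOp_eq {l : ℕ} (hl : 2 * l < Fintype.card α) {y : Finset α → ℂ}
    (hy : y ∈ level α l) : ∃ x ∈ level α (l + 1), raiseOp x = y := by
  let raiseLower : level α l →ₗ[ℂ] level α l :=
    (raiseOp ∘ₗ lowerOp).restrict fun _ hx => raiseOp_mem_level (lowerOp_mem_level hx)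
  have hinj : Function.Injective raiseLower := by
    refine (injective_iff_map_eq_zero _).2 fun x hx => Subtype.ext ?_
    exact eq_zero_of_raiseOp_lowerOp_eq_zero hl x.2 (congrArg Subtype.val hx)
  obtain ⟨z, hz⟩ := LinearMap.injective_iff_surjective.1 hinj ⟨y, hy⟩
  exact ⟨lowerOp z, lowerOp_mem_level z.2, congrArg Subtype.val hz⟩

lemma finrank_level_inf_ker_raiseOp {l : ℕ} (hl : 2 * l < Fintype.card α) :
    Module.finrank ℂ ↥(level α (l + 1) ⊓ LinearMap.ker raiseOp) + (Fintype.card α).choose l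
      = (Fintype.card α).choose (l + 1) := by
  let raise : level α (l + 1) →ₗ[ℂ] level α l := raiseOp.restrict fun _ => raiseOp_mem_level
  have hsurj : LinearMap.range raise = ⊤ := by
    refine LinearMap.range_eq_top.2 fun y => ?_
    obtain ⟨x, hx, hxy⟩ := exists_raiseOp_eq hl y.2
    exact ⟨⟨x, hx⟩, Subtype.ext hxy⟩
  have hker : Module.finrank ℂ (LinearMap.ker raise)
      = Module.finrank ℂ ↥(level α (l + 1) ⊓ LinearMap.ker raiseOp) := by
    rw [LinearMap.ker_restrict, ← Submodule.map_comap_subtype, Submodule.finrank_map_subtype_eq]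
  rw [← finrank_level, ← finrank_level, ← hker, add_comm, ← finrank_top ℂ (level α l), ← hsurj]
  exact LinearMap.finrank_range_add_finrank_ker raise

end SubsetSl2

open SubsetSl2

def zeroSetEquiv (ι : Type*) [Fintype ι] [DecidableEq ι] : (ι → Fin 2) ≃ Finset ι where
  toFun f := {i | f i = 0}
  invFun s i := if i ∈ s then 0 else 1
  left_inv f := funext fun i => by
    by_cases h : f i = 0
    · simp [h]
    · simp [Fin.eq_one_of_ne_zero _ h]
  right_inv s := by ext; simp

def tensorBasis (n : ℕ) : Module.Basis (Finset (Fin n)) ℂ (⨂[ℂ] _ : Fin n, V2) :=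
  (Basis.piTensorProduct fun _ => Pi.basisFun ℂ (Fin 2)).reindex (zeroSetEquiv (Fin n))

lemma tensorBasis_apply (n : ℕ) (s : Finset (Fin n)) :
    tensorBasis n s = ⨂ₜ[ℂ] i, bvec (if i ∈ s then 0 else 1) := by
  simp [tensorBasis, Basis.piTensorProduct_apply, zeroSetEquiv, bvec]

lemma derivAction_tprod (n : ℕ) (g : Matrix (Fin 2) (Fin 2) ℂ) (v : Fin n → V2) :
    derivAction n g (⨂ₜ[ℂ] i, v i) = ∑ i, ⨂ₜ[ℂ] j, Function.update v i (g *ᵥ v i) j := by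
  simp only [derivAction, LinearMap.sum_apply, PiTensorProduct.map_tprod]
  refine Finset.sum_congr rfl fun i _ => congrArg _ (funext fun j => ?_)
  rcases eq_or_ne j i with rfl | h
  · simp
  · simp [Function.update_of_ne h]

lemma Hmat_mulVec_bvec_zero : Hmat *ᵥ bvec 0 = -bvec 0 := by
  ext r; fin_cases r <;> simp [Hmat, bvec]

lemma Hmat_mulVec_bvec_one : Hmat *ᵥ bvec 1 = bvec 1 := by
  ext r; fin_cases r <;> simp [Hmat, bvec]

lemma Emat_mulVec_bvec_zero : Emat *ᵥ bvec 0 = bvec 1 := by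
  ext r; fin_cases r <;> simp [Emat, bvec]

lemma Emat_mulVec_bvec_one : Emat *ᵥ bvec 1 = 0 := by
  ext r; fin_cases r <;> simp [Emat, bvec]

lemma derivAction_Hmat_tensorBasis (n : ℕ) (s : Finset (Fin n)) :
    derivAction n Hmat (tensorBasis n s) = ((n : ℂ) - 2 * #s) • tensorBasis n s := by
  have hsign (i : Fin n) : Hmat *ᵥ bvec (if i ∈ s then 0 else 1)
      = (if i ∈ s then -1 else 1 : ℂ) • bvec (if i ∈ s then 0 else 1) := by
    split_ifs
    · rw [Hmat_mulVec_bvec_zero, neg_one_smul]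
    · rw [Hmat_mulVec_bvec_one, one_smul]
  simp only [tensorBasis_apply, derivAction_tprod, hsign, MultilinearMap.map_update_smul,
    Function.update_eq_self, ← sum_smul]
  congr 1
  rw [← sum_add_sum_compl s, sum_congr rfl fun i hi => if_pos hi,
    sum_congr rfl fun i hi => if_neg (mem_compl.1 hi), sum_const, sum_const, card_compl,
    Fintype.card_fin, nsmul_eq_mul, nsmul_eq_mul,
    Nat.cast_sub ((card_le_univ s).trans_eq (Fintype.card_fin n))]
  ring

lemma derivAction_Emat_tensorBasis (n : ℕ) (s : Finset (Fin n)) :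
    derivAction n Emat (tensorBasis n s) = ∑ i ∈ s, tensorBasis n (s.erase i) := by
  rw [tensorBasis_apply, derivAction_tprod, ← Fintype.sum_ite_mem s]
  refine Finset.sum_congr rfl fun i _ => ?_
  split_ifs with hi
  · rw [tensorBasis_apply]
    congr 1
    funext j
    rcases eq_or_ne j i with rfl | hj
    · rw [Function.update_self, Emat_mulVec_bvec_zero, if_neg (notMem_erase j s)]
    · simp [hj]
  · rw [Emat_mulVec_bvec_one]
    exact MultilinearMap.map_update_zero _ _ _

lemma equivFun_comp_derivAction_Hmat (n : ℕ) :
    (tensorBasis n).equivFun.toLinearMap ∘ₗ derivAction n Hmat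
      = weightOp ∘ₗ (tensorBasis n).equivFun := by
  refine (tensorBasis n).ext fun s => funext fun u => ?_
  by_cases h : s = u
  · subst h; simp [derivAction_Hmat_tensorBasis]
  · simp [derivAction_Hmat_tensorBasis, h]

lemma equivFun_comp_derivAction_Emat (n : ℕ) :
    (tensorBasis n).equivFun.toLinearMap ∘ₗ derivAction n Emat
      = raiseOp ∘ₗ (tensorBasis n).equivFun := by
  refine (tensorBasis n).ext fun s => funext fun u => ?_
  simp only [LinearMap.comp_apply, LinearEquiv.coe_coe, derivAction_Emat_tensorBasis, map_sum,
    Module.Basis.equivFun_self, raiseOp_apply, Finset.sum_apply, sum_boole]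
  congr 2
  ext i
  simp only [mem_filter, mem_compl]
  constructor
  · rintro ⟨hi, rfl⟩
    exact ⟨notMem_erase i s, (insert_erase hi).symm⟩
  · rintro ⟨hi, rfl⟩
    exact ⟨mem_insert_self i u, erase_insert hi⟩

theorem stmt_5 (n m : ℕ) (hm : 2 * m ≤ n) :
    (Module.finrank ℂ
      ↥(LinearMap.ker (derivAction n Hmat - ((n : ℂ) - 2 * m) • LinearMap.id) ⊓
        LinearMap.ker (derivAction n Emat)) : ℤ) =
    (n.choose m : ℤ) - (if m = 0 then 0 else (n.choose (m - 1) : ℤ)) := by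
  set e := (tensorBasis n).equivFun
  have hH : LinearMap.ker (derivAction n Hmat - ((n : ℂ) - 2 * m) • LinearMap.id)
      = (level (Fin n) m).comap e.toLinearMap := by
    rw [← ker_weightOp_sub, Fintype.card_fin]
    refine ker_eq_comap_of_comp_eq e ?_
    rw [LinearMap.comp_sub, LinearMap.sub_comp, equivFun_comp_derivAction_Hmat,
      LinearMap.comp_smul, LinearMap.smul_comp, LinearMap.comp_id, LinearMap.id_comp]
  have hE : LinearMap.ker (derivAction n Emat) = (LinearMap.ker raiseOp).comap e.toLinearMap :=
    ker_eq_comap_of_comp_eq e (equivFun_comp_derivAction_Emat n)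
  rw [hH, hE, ← Submodule.comap_inf, Submodule.comap_equiv_eq_map_symm, LinearEquiv.finrank_map_eq]
  rcases m with _ | l
  · rw [inf_eq_left.2 level_zero_le_ker_raiseOp, finrank_level]
    simp
  · have := finrank_level_inf_ker_raiseOp (α := Fin n) (l := l)
      (by rw [Fintype.card_fin]; omega)
    rw [Fintype.card_fin] at this
    rw [if_neg l.succ_ne_zero, Nat.add_sub_cancel]
    omega
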